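/- Let G be a Polish group and X a stationary G-process. Then X is stochastically continuous if and only if for every E in the product σ-algebra ℬ^G the function G → [0,1], g ↦ ℙ_X(R_g⁻¹(E) △ E), is continuous. -/

import Mathlib

/-!
Stationarity makes every translation `R_g` preserve `ℙ_X`, so `g ↦ ℙ_X(R_g⁻¹ E ∆ E)` is
continuous as soon as it tends to `0` at the identity, and the sets `E` for which it does form a
σ-algebra: they are closed under complements, finite unions and limits for the pseudometric
`ℙ_X(E ∆ F)`. For a cylinder `E = {x | x_h ∈ B}` the quantity is `ℙ(X_{g⁻¹h} ∈ B ∆ X_h ∈ B)`;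
since `X_{g⁻¹h}` has the law of `X_h`, squeezing `B` between a compact and an open set of almost
the same measure shows that it tends to `0` when `X_{g⁻¹h} → X_h` in probability.

Conversely, if `|X_g - X_{g₀}| ≥ ε` and `|X_{g₀}| < Nε`, some point of the grid `εℤ ∩ [-Nε, Nε]`
separates `X_g` from `X_{g₀}`, so `ℙ(|X_g - X_{g₀}| ≥ ε)` is at most a tail of `X_{g₀}` plus
finitely many terms `ℙ_X(R_c⁻¹ E ∆ E)` with `E` a half-space cylinder and `c → 1`.
-/

open MeasureTheory ProbabilityTheory Filter Topology symmDiff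

noncomputable section

namespace Paper

variable {G : Type*} {Ω : Type*}

/-- The distribution of a `G`-process: the pushforward of `P` on `ℝ^G`. -/
def procLaw [MeasurableSpace Ω] (P : Measure Ω) (X : G → Ω → ℝ) : Measure (G → ℝ) :=
  Measure.map (fun ω g => X g ω) P

/-- The left translation `R_g` of `ℝ^G`, `R_g((x_h)_h) = (x_{g⁻¹ h})_h`. -/
def shiftMap [Group G] (g : G) : (G → ℝ) → G → ℝ := fun x h => x (g⁻¹ * h)

/-- The (possibly non-invertible) right-style translation `Q_g((x_h)_h) = (x_{g h})_h`. -/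
def transMap [Mul G] (g : G) : (G → ℝ) → G → ℝ := fun x h => x (g * h)

/-- (Left) stationarity of a `G`-process. -/
def Stationary [Mul G] [MeasurableSpace Ω] (P : Measure Ω) (X : G → Ω → ℝ) : Prop :=
  ∀ g : G, procLaw P (fun h => X (g * h)) = procLaw P X

/-- Ergodicity of a stationary `G`-process: every a.s. translation-invariant measurable set
in `ℝ^G` has law-measure `0` or `1`. -/
def ErgodicProcess [Group G] [MeasurableSpace Ω] (P : Measure Ω) (X : G → Ω → ℝ) : Prop :=
  ∀ E : Set (G → ℝ), MeasurableSet E →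
    (∀ g : G, procLaw P X ((shiftMap g ⁻¹' E) ∆ E) = 0) →
    procLaw P X E = 0 ∨ procLaw P X E = 1

/-- Weak mixing of a stationary `G`-process: the diagonal product system
`{R_g × R_g}` on `(ℝ^G × ℝ^G, ℙ_X ⊗ ℙ_X)` is ergodic. -/
def WeaklyMixingProcess [Group G] [MeasurableSpace Ω] (P : Measure Ω) (X : G → Ω → ℝ) : Prop :=
  ∀ E : Set ((G → ℝ) × (G → ℝ)), MeasurableSet E →
    (∀ g : G, ((procLaw P X).prod (procLaw P X))
        (((fun p => (shiftMap g p.1, shiftMap g p.2)) ⁻¹' E) ∆ E) = 0) →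
    ((procLaw P X).prod (procLaw P X)) E = 0 ∨ ((procLaw P X).prod (procLaw P X)) E = 1

/-- Separability in probability of a `G`-process. -/
def SeparableInProbability [MeasurableSpace Ω] (P : Measure Ω) (X : G → Ω → ℝ) : Prop :=
  ∃ S : Set G, S.Countable ∧
    ∀ g : G, ∃ s : ℕ → G, (∀ n, s n ∈ S) ∧
      TendstoInMeasure P (fun n => X (s n)) atTop (X g)

/-- The finite dimensional distribution of the process along `gs : Fin n → G`. -/
def fdd [MeasurableSpace Ω] (P : Measure Ω) (X : G → Ω → ℝ) {n : ℕ} (gs : Fin n → G) :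
    Measure (Fin n → ℝ) :=
  Measure.map (fun ω i => X (gs i) ω) P

/-- A measure on `ℝⁿ` is infinitely divisible if for every `m` it is the `m`-fold
convolution power of some probability measure. -/
def InfinitelyDivisible {n : ℕ} (μ : Measure (Fin n → ℝ)) : Prop :=
  ∀ m : ℕ, 0 < m → ∃ ν : Measure (Fin n → ℝ), IsProbabilityMeasure ν ∧
    μ = Measure.map (fun x : Fin m → Fin n → ℝ => ∑ i, x i) (Measure.pi fun _ => ν)

/-- A `G`-process is infinitely divisible if all its finite dimensional
distributions are infinitely divisible. -/
def InfinitelyDivisibleProcess [MeasurableSpace Ω] (P : Measure Ω) (X : G → Ω → ℝ) : Prop :=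
  ∀ (n : ℕ) (gs : Fin n → G), InfinitelyDivisible (fdd P X gs)

/-- Stochastic continuity of a process indexed by a topological group (or semigroup). -/
def StochasticallyContinuous [TopologicalSpace G] [MeasurableSpace Ω]
    (P : Measure Ω) (X : G → Ω → ℝ) : Prop :=
  ∀ g₀ : G, TendstoInMeasure P X (𝓝 g₀) (X g₀)

/-- All finite dimensional characteristic functions of the process are nowhere vanishing. -/
def CharFunNonVanishing [MeasurableSpace Ω] (P : Measure Ω) (X : G → Ω → ℝ) : Prop :=
  ∀ (n : ℕ) (gs : Fin n → G) (t : Fin n → ℝ),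
    (∫ x, Complex.exp (Complex.I * ((∑ i, t i * x i : ℝ) : ℂ)) ∂(fdd P X gs)) ≠ 0

/-- A measure on `ℝⁿ` is a (possibly degenerate) Gaussian measure iff each of its
one-dimensional linear-functional pushforwards is a real Gaussian. -/
def IsGaussianMeasure {n : ℕ} (μ : Measure (Fin n → ℝ)) : Prop :=
  ∀ t : Fin n → ℝ, ∃ (m : ℝ) (v : NNReal),
    Measure.map (fun x => ∑ i, t i * x i) μ = gaussianReal m v

/-- A Gaussian `G`-process: all finite dimensional distributions are
(possibly degenerate) Gaussian. -/
def GaussianProcess [MeasurableSpace Ω] (P : Measure Ω) (X : G → Ω → ℝ) : Prop :=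
  ∀ (n : ℕ) (gs : Fin n → G), IsGaussianMeasure (fdd P X gs)

/-- Ergodicity of a probability preserving `Θ`-system (maps need not be invertible). -/
def ErgodicSystem {Θ 𝕏 : Type*} [MeasurableSpace 𝕏] (ξ : Measure 𝕏) (T : Θ → 𝕏 → 𝕏) : Prop :=
  ∀ A : Set 𝕏, MeasurableSet A → (∀ θ : Θ, ξ ((T θ ⁻¹' A) ∆ A) = 0) →
    ξ A = 0 ∨ ξ A = 1

/-- A probability preserving automorphism: a bi-measurable measure-preserving bijection
between full-measure measurable subsets. -/
def IsPPAutomorphism [MeasurableSpace Ω] (P : Measure Ω) (T : Ω → Ω) : Prop :=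
  Measurable T ∧ (∀ A : Set Ω, MeasurableSet A → P (T ⁻¹' A) = P A) ∧
  ∃ (A B : Set Ω) (σ : Ω → Ω), MeasurableSet A ∧ MeasurableSet B ∧
    P A = 1 ∧ P B = 1 ∧ Measurable σ ∧ Set.MapsTo T A B ∧ Set.MapsTo σ B A ∧
    Set.InvOn σ T A B

open scoped ENNReal

section InvariantSets

variable {α ι : Type*} [MeasurableSpace α] {μ : Measure α} {T : ι → α → α} {l : Filter ι}

theorem tendsto_measure_preimage_symmDiff_compl {E : Set α}
    (hE : Tendsto (fun i => μ ((T i ⁻¹' E) ∆ E)) l (𝓝 0)) :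
    Tendsto (fun i => μ ((T i ⁻¹' Eᶜ) ∆ Eᶜ)) l (𝓝 0) := by
  simpa only [Set.preimage_compl, compl_symmDiff_compl] using hE

theorem tendsto_measure_preimage_symmDiff_union {E F : Set α}
    (hE : Tendsto (fun i => μ ((T i ⁻¹' E) ∆ E)) l (𝓝 0))
    (hF : Tendsto (fun i => μ ((T i ⁻¹' F) ∆ F)) l (𝓝 0)) :
    Tendsto (fun i => μ ((T i ⁻¹' (E ∪ F)) ∆ (E ∪ F))) l (𝓝 0) := by
  have hsum := hE.add hF
  rw [add_zero] at hsum
  refine tendsto_of_tendsto_of_tendsto_of_le_of_le tendsto_const_nhds hsum (fun _ => zero_le)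
    fun i => ?_
  rw [Set.preimage_union]
  exact (measure_mono (Set.union_symmDiff_union_subset ..)).trans (measure_union_le _ _)

theorem tendsto_measure_preimage_symmDiff_of_forall_approx
    (hT : ∀ i, MeasurePreserving (T i) μ μ) {E : Set α} (hE : MeasurableSet E)
    (happrox : ∀ ε > 0, ∃ F, MeasurableSet F ∧ μ (E ∆ F) ≤ ε ∧
      Tendsto (fun i => μ ((T i ⁻¹' F) ∆ F)) l (𝓝 0)) :
    Tendsto (fun i => μ ((T i ⁻¹' E) ∆ E)) l (𝓝 0) := by
  rw [ENNReal.tendsto_nhds_zero]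
  intro ε hε
  have hε3 : 0 < ε / 3 := ENNReal.div_pos hε.ne' ENNReal.ofNat_ne_top
  obtain ⟨F, hF, hEF, hFlim⟩ := happrox (ε / 3) hε3
  filter_upwards [ENNReal.tendsto_nhds_zero.mp hFlim (ε / 3) hε3] with i hi
  have hshift : μ ((T i ⁻¹' E) ∆ (T i ⁻¹' F)) = μ (E ∆ F) := by
    rw [← Set.preimage_symmDiff, (hT i).measure_preimage (hE.symmDiff hF).nullMeasurableSet]
  calc μ ((T i ⁻¹' E) ∆ E)
      ≤ μ ((T i ⁻¹' E) ∆ (T i ⁻¹' F)) + μ ((T i ⁻¹' F) ∆ F) + μ (F ∆ E) :=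
        (measure_symmDiff_le _ _ _).trans
          (by rw [add_assoc]; gcongr; exact measure_symmDiff_le _ _ _)
    _ ≤ ε / 3 + ε / 3 + ε / 3 := by
        rw [hshift, symmDiff_comm F]
        gcongr
    _ = ε := ENNReal.add_thirds ε

theorem tendsto_measure_preimage_symmDiff_iUnion [IsFiniteMeasure μ]
    (hT : ∀ i, MeasurePreserving (T i) μ μ) {f : ℕ → Set α} (hf : ∀ n, MeasurableSet (f n))
    (hlim : ∀ n, Tendsto (fun i => μ ((T i ⁻¹' f n) ∆ f n)) l (𝓝 0)) :
    Tendsto (fun i => μ ((T i ⁻¹' ⋃ n, f n) ∆ ⋃ n, f n)) l (𝓝 0) := by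
  have hacc : ∀ N, Tendsto (fun i => μ ((T i ⁻¹' Set.accumulate f N) ∆ Set.accumulate f N))
      l (𝓝 0) := by
    intro N
    induction N with
    | zero => simpa only [Set.accumulate_zero_nat] using hlim 0
    | succ N ih =>
      rw [Set.accumulate_succ]
      exact tendsto_measure_preimage_symmDiff_union ih (hlim _)
  have hmeas_acc : ∀ N, MeasurableSet (Set.accumulate f N) := fun N =>
    MeasurableSet.iUnion fun n => MeasurableSet.iUnion fun _ => hf n
  have hgap : Tendsto (fun N => μ ((⋃ n, f n) ∆ Set.accumulate f N)) atTop (𝓝 0) := by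
    have hdiff := ENNReal.Tendsto.sub tendsto_const_nhds
      (tendsto_measure_iUnion_accumulate (μ := μ) (f := f)) (Or.inl (measure_ne_top μ (⋃ n, f n)))
    rw [tsub_self] at hdiff
    refine hdiff.congr fun N => ?_
    rw [symmDiff_of_ge (Set.accumulate_subset_iUnion N),
      measure_sdiff (Set.accumulate_subset_iUnion N) (hmeas_acc N).nullMeasurableSet
        (measure_ne_top μ _)]
  refine tendsto_measure_preimage_symmDiff_of_forall_approx hT (MeasurableSet.iUnion hf)
    fun ε hε => ?_
  obtain ⟨N, hN⟩ := (ENNReal.tendsto_nhds_zero.mp hgap ε hε).exists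
  exact ⟨_, hmeas_acc N, hN, hacc N⟩

theorem tendsto_measure_preimage_symmDiff_of_generateFrom [IsFiniteMeasure μ]
    (hT : ∀ i, MeasurePreserving (T i) μ μ) {C : Set (Set α)}
    (hgen : ‹MeasurableSpace α› = MeasurableSpace.generateFrom C)
    (hC : ∀ E ∈ C, Tendsto (fun i => μ ((T i ⁻¹' E) ∆ E)) l (𝓝 0))
    {E : Set α} (hE : MeasurableSet E) :
    Tendsto (fun i => μ ((T i ⁻¹' E) ∆ E)) l (𝓝 0) := by
  rw [hgen] at hE
  induction E, hE using MeasurableSpace.generateFrom_induction with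
  | hC E hE => exact hC E hE
  | empty => simpa using tendsto_const_nhds
  | compl E _ hE => exact tendsto_measure_preimage_symmDiff_compl hE
  | iUnion f hf hlim =>
    exact tendsto_measure_preimage_symmDiff_iUnion hT (fun n => hgen ▸ hf n) hlim

end InvariantSets

theorem ENNReal.tendsto_of_le_add_of_le_add {ι : Type*} {l : Filter ι} {f ψ : ι → ℝ≥0∞}
    {a : ℝ≥0∞} (ha : a ≠ ∞) (hψ : Tendsto ψ l (𝓝 0)) (hle : ∀ i, f i ≤ a + ψ i)
    (hge : ∀ i, a ≤ f i + ψ i) : Tendsto f l (𝓝 a) := by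
  rw [ENNReal.tendsto_nhds ha]
  intro ε hε
  filter_upwards [ENNReal.tendsto_nhds_zero.mp hψ ε hε] with i hi
  exact ⟨tsub_le_iff_right.2 ((hge i).trans (by gcongr)), (hle i).trans (by gcongr)⟩

theorem continuous_measure_preimage_symmDiff {α G : Type*} [MeasurableSpace α] {μ : Measure α}
    [IsFiniteMeasure μ] [Group G] [TopologicalSpace G] [IsTopologicalGroup G] {T : G → α → α}
    (hmul : ∀ a b, T (a * b) = T a ∘ T b) (hT : ∀ g, MeasurePreserving (T g) μ μ)
    {E : Set α} (hE : MeasurableSet E)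
    (hE1 : Tendsto (fun g => μ ((T g ⁻¹' E) ∆ E)) (𝓝 1) (𝓝 0)) :
    Continuous fun g => μ ((T g ⁻¹' E) ∆ E) := by
  refine continuous_iff_continuousAt.2 fun g₀ => ?_
  show Tendsto _ (𝓝 g₀) (𝓝 (μ ((T g₀ ⁻¹' E) ∆ E)))
  have hdist : ∀ g, μ ((T g ⁻¹' E) ∆ (T g₀ ⁻¹' E)) = μ ((T (g * g₀⁻¹) ⁻¹' E) ∆ E) := by
    intro g
    have hsplit : T g ⁻¹' E = T g₀ ⁻¹' (T (g * g₀⁻¹) ⁻¹' E) := by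
      rw [← Set.preimage_comp, ← hmul, inv_mul_cancel_right]
    have hm : MeasurableSet ((T (g * g₀⁻¹) ⁻¹' E) ∆ E) :=
      ((hT _).measurable hE).symmDiff hE
    rw [hsplit, ← Set.preimage_symmDiff, (hT g₀).measure_preimage hm.nullMeasurableSet]
  have hψ : Tendsto (fun g => μ ((T (g * g₀⁻¹) ⁻¹' E) ∆ E)) (𝓝 g₀) (𝓝 0) :=
    hE1.comp ((continuous_id.mul continuous_const).tendsto' g₀ 1 (mul_inv_cancel g₀))
  refine ENNReal.tendsto_of_le_add_of_le_add (measure_ne_top μ _) hψ (fun g => ?_) fun g => ?_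
  · rw [← hdist, add_comm]
    exact measure_symmDiff_le _ _ _
  · rw [← hdist, symmDiff_comm (T g ⁻¹' E) (T g₀ ⁻¹' E), add_comm]
    exact measure_symmDiff_le _ _ _

theorem mem_sdiff_or_mem_sdiff_of_dist_lt {E : Type*} [PseudoMetricSpace E] {K B U : Set E}
    {δ : ℝ} (hKB : K ⊆ B) (hBU : B ⊆ U) (hKU : Metric.thickening δ K ⊆ U) {x y : E}
    (hx : x ∈ B) (hy : y ∉ B) (hxy : dist x y < δ) :
    x ∈ U \ K ∨ y ∈ U \ K := by
  by_cases hxK : x ∈ K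
  · refine Or.inr ⟨hKU (Metric.mem_thickening_iff.2 ⟨x, hxK, ?_⟩), fun hyK => hy (hKB hyK)⟩
    rwa [dist_comm]
  · exact Or.inl ⟨hBU hx, hxK⟩

section Regularity

variable {E ι : Type*} [MeasurableSpace Ω] [MetricSpace E] [MeasurableSpace E] [BorelSpace E]

theorem exists_isCompact_isOpen_sdiff_lt (ν : Measure E) [IsFiniteMeasure ν]
    [PolishSpace E] {B : Set E} (hB : MeasurableSet B) {ε : ℝ≥0∞} (hε : 0 < ε) :
    ∃ K U, K ⊆ B ∧ B ⊆ U ∧ IsCompact K ∧ IsOpen U ∧ ν (U \ K) ≤ ε := by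
  have hε2 : ε / 2 ≠ 0 := (ENNReal.half_pos hε.ne').ne'
  obtain ⟨K, hKB, hK, hBK⟩ := hB.exists_isCompact_sdiff_lt (measure_ne_top ν B) hε2
  obtain ⟨U, hBU, hU, -, hUB⟩ := hB.exists_isOpen_sdiff_lt (measure_ne_top ν B) hε2
  refine ⟨K, U, hKB, hBU, hK, hU, ?_⟩
  calc ν (U \ K) = ν ((U \ B) ∪ (B \ K)) := by rw [Set.sdiff_union_sdiff_cancel hBU hKB]
    _ ≤ ε / 2 + ε / 2 := (measure_union_le _ _).trans (add_le_add hUB.le hBK.le)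
    _ = ε := ENNReal.add_halves ε

theorem tendsto_measure_preimage_symmDiff_of_tendstoInMeasure [PolishSpace E] {P : Measure Ω}
    [IsFiniteMeasure P] {Y : ι → Ω → E} {Z : Ω → E} {l : Filter ι}
    (hY : TendstoInMeasure P Y l Z) (hident : ∀ i, IdentDistrib (Y i) Z P P)
    {B : Set E} (hB : MeasurableSet B) :
    Tendsto (fun i => P ((Y i ⁻¹' B) ∆ (Z ⁻¹' B))) l (𝓝 0) := by
  rw [ENNReal.tendsto_nhds_zero]
  intro ε hε
  have hε3 : 0 < ε / 3 := ENNReal.div_pos hε.ne' ENNReal.ofNat_ne_top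
  obtain ⟨K, U, hKB, hBU, hK, hU, hUK⟩ :=
    exists_isCompact_isOpen_sdiff_lt (P.map Z) hB hε3
  obtain ⟨δ, hδ, hKU⟩ := hK.exists_thickening_subset_open hU (hKB.trans hBU)
  have hnear := ENNReal.tendsto_nhds_zero.mp (tendstoInMeasure_iff_dist.mp hY δ hδ) (ε / 3) hε3
  filter_upwards [hnear] with i hi
  have hZUK : P (Z ⁻¹' (U \ K)) ≤ ε / 3 := by
    rwa [← Measure.map_apply_of_aemeasurable (hident i).aemeasurable_snd
      (hU.measurableSet.diff hK.measurableSet)]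
  have hsub : (Y i ⁻¹' B) ∆ (Z ⁻¹' B) ⊆
      (Y i ⁻¹' (U \ K) ∪ Z ⁻¹' (U \ K)) ∪ {ω | δ ≤ dist (Y i ω) (Z ω)} := by
    intro ω hω
    by_cases hd : dist (Y i ω) (Z ω) < δ
    · left
      rcases Set.mem_symmDiff.1 hω with ⟨hYB, hZB⟩ | ⟨hZB, hYB⟩
      · exact mem_sdiff_or_mem_sdiff_of_dist_lt hKB hBU hKU hYB hZB hd
      · exact (mem_sdiff_or_mem_sdiff_of_dist_lt hKB hBU hKU hZB hYB
          (by rwa [dist_comm])).symm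
    · exact Or.inr (not_lt.1 hd)
  calc P ((Y i ⁻¹' B) ∆ (Z ⁻¹' B))
      ≤ P (Y i ⁻¹' (U \ K)) + P (Z ⁻¹' (U \ K)) + P {ω | δ ≤ dist (Y i ω) (Z ω)} :=
        (measure_mono hsub).trans
          ((measure_union_le _ _).trans (by gcongr; exact measure_union_le _ _))
    _ ≤ ε / 3 + ε / 3 + ε / 3 := by
        rw [(hident i).measure_mem_eq (hU.measurableSet.diff hK.measurableSet)]
        gcongr
    _ = ε := ENNReal.add_thirds ε

end Regularity

section Grid

variable {ι : Type*} [MeasurableSpace Ω]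

theorem exists_int_mem_Icc_separating {ε y z : ℝ} {N : ℕ} (hε : 0 < ε) (hz : |z| < N * ε)
    (hyz : ε ≤ |y - z|) : ∃ k ∈ Finset.Icc (-N : ℤ) N, ¬(y < k * ε ↔ z < k * ε) := by
  set k := ⌊z / ε⌋
  have hkz : k * ε ≤ z := (le_div_iff₀ hε).1 (Int.floor_le _)
  have hzk : z < (k + 1) * ε := (div_lt_iff₀ hε).1 (Int.lt_floor_add_one _)
  have hk_lower : -(N : ℤ) ≤ k :=
    Int.le_floor.2 (by rw [le_div_iff₀ hε]; push_cast; linarith [neg_abs_le z])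
  have hk_upper : k < N :=
    Int.floor_lt.2 (by rw [div_lt_iff₀ hε]; push_cast; linarith [le_abs_self z])
  rcases le_abs'.1 hyz with hy | hy
  · exact ⟨k, Finset.mem_Icc.2 ⟨hk_lower, hk_upper.le⟩, by
      simp only [not_lt.2 hkz, iff_false, not_not]; linarith⟩
  · refine ⟨k + 1, Finset.mem_Icc.2 ⟨by omega, by omega⟩, ?_⟩
    push_cast
    simp only [hzk, iff_true, not_lt]
    linarith

theorem tendsto_measure_le_abs_atTop {P : Measure Ω} [IsFiniteMeasure P] {Z : Ω → ℝ}
    (hZ : AEMeasurable Z P) : Tendsto (fun r : ℝ => P {ω | r ≤ |Z ω|}) atTop (𝓝 0) := by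
  have hempty : ⋂ r : ℝ, {ω | r ≤ |Z ω|} = ∅ :=
    Set.eq_empty_of_forall_notMem fun ω hω =>
      (lt_add_one |Z ω|).not_ge (Set.mem_iInter.1 hω (|Z ω| + 1))
  have hlim := tendsto_measure_iInter_atTop (μ := P)
    (fun r => nullMeasurableSet_le aemeasurable_const hZ.abs)
    (fun r s hrs ω (hω : s ≤ |Z ω|) => hrs.trans hω) ⟨0, measure_ne_top P _⟩
  rwa [hempty, measure_empty] at hlim

theorem tendstoInMeasure_of_tendsto_measure_symmDiff_setOf_lt {P : Measure Ω}
    [IsFiniteMeasure P] {Y : ι → Ω → ℝ} {Z : Ω → ℝ} {l : Filter ι} (hZ : AEMeasurable Z P)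
    (h : ∀ a : ℝ, Tendsto (fun i => P ({ω | Y i ω < a} ∆ {ω | Z ω < a})) l (𝓝 0)) :
    TendstoInMeasure P Y l Z := by
  rw [tendstoInMeasure_iff_dist]
  intro ε hε
  rw [ENNReal.tendsto_nhds_zero]
  intro η hη
  have hη2 : 0 < η / 2 := ENNReal.half_pos hη.ne'
  obtain ⟨N, hN⟩ : ∃ N : ℕ, P {ω | N * ε ≤ |Z ω|} ≤ η / 2 :=
    (ENNReal.tendsto_nhds_zero.mp ((tendsto_measure_le_abs_atTop hZ).comp
      (tendsto_natCast_atTop_atTop.atTop_mul_const hε)) _ hη2).exists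
  have hsum : Tendsto (fun i => ∑ k ∈ Finset.Icc (-N : ℤ) N,
      P ({ω | Y i ω < k * ε} ∆ {ω | Z ω < k * ε})) l (𝓝 0) := by
    simpa using tendsto_finsetSum (Finset.Icc (-N : ℤ) N) fun k _ => h (k * ε)
  filter_upwards [ENNReal.tendsto_nhds_zero.mp hsum (η / 2) hη2] with i hi
  have hsub : {ω | ε ≤ dist (Y i ω) (Z ω)} ⊆ {ω | N * ε ≤ |Z ω|} ∪
      ⋃ k ∈ Finset.Icc (-N : ℤ) N, {ω | Y i ω < k * ε} ∆ {ω | Z ω < k * ε} := by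
    intro ω hω
    rw [Set.mem_ofPred_eq, Real.dist_eq] at hω
    by_cases hZω : N * ε ≤ |Z ω|
    · exact Or.inl hZω
    obtain ⟨k, hk, hsep⟩ := exists_int_mem_Icc_separating hε (not_le.1 hZω) hω
    refine Or.inr (Set.mem_biUnion hk ?_)
    simp only [Set.mem_symmDiff, Set.mem_ofPred_eq]
    tauto
  calc P {ω | ε ≤ dist (Y i ω) (Z ω)}
      ≤ P {ω | N * ε ≤ |Z ω|} + ∑ k ∈ Finset.Icc (-N : ℤ) N,
          P ({ω | Y i ω < k * ε} ∆ {ω | Z ω < k * ε}) :=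
        (measure_mono hsub).trans
          ((measure_union_le _ _).trans (by gcongr; exact measure_biUnion_finset_le _ _))
    _ ≤ η / 2 + η / 2 := add_le_add hN hi
    _ = η := ENNReal.add_halves η

end Grid

section StationaryProcesses

variable [MeasurableSpace Ω] {P : Measure Ω} {X : G → Ω → ℝ}

instance isFiniteMeasure_procLaw [IsFiniteMeasure P] : IsFiniteMeasure (procLaw P X) := by
  unfold procLaw
  infer_instance

theorem procLaw_apply (hX : ∀ g, Measurable (X g)) {E : Set (G → ℝ)} (hE : MeasurableSet E) :
    procLaw P X E = P ((fun ω g => X g ω) ⁻¹' E) :=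
  Measure.map_apply (measurable_pi_lambda _ hX) hE

theorem procLaw_eval_preimage_symmDiff (hX : ∀ g, Measurable (X g)) (a b : G) {B : Set ℝ}
    (hB : MeasurableSet B) :
    procLaw P X ((Function.eval a ⁻¹' B) ∆ (Function.eval b ⁻¹' B)) =
      P ((X a ⁻¹' B) ∆ (X b ⁻¹' B)) :=
  procLaw_apply hX ((measurable_pi_apply a hB).symmDiff (measurable_pi_apply b hB))

theorem map_eval_procLaw (hX : ∀ g, Measurable (X g)) (h : G) :
    (procLaw P X).map (Function.eval h) = P.map (X h) := by
  rw [procLaw, Measure.map_map (measurable_pi_apply h) (measurable_pi_lambda _ hX)]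
  rfl

variable [Group G]

theorem shiftMap_one : shiftMap (1 : G) = id := by
  funext x h
  simp [shiftMap]

theorem shiftMap_mul (a b : G) : shiftMap (a * b) = shiftMap a ∘ shiftMap b := by
  funext x h
  simp [shiftMap, mul_assoc]

theorem measurable_shiftMap (g : G) : Measurable (shiftMap g) :=
  measurable_pi_lambda _ fun _ => measurable_pi_apply _

theorem shiftMap_preimage_eval (c h : G) (B : Set ℝ) :
    shiftMap c ⁻¹' (Function.eval h ⁻¹' B) = Function.eval (c⁻¹ * h) ⁻¹' B :=
  rfl

theorem Stationary.measurePreserving_shiftMap (hX : ∀ g, Measurable (X g))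
    (hstat : Stationary P X) (g : G) :
    MeasurePreserving (shiftMap g) (procLaw P X) (procLaw P X) where
  measurable := measurable_shiftMap g
  map_eq := by
    rw [procLaw, Measure.map_map (measurable_shiftMap g) (measurable_pi_lambda _ hX)]
    exact hstat g⁻¹

theorem Stationary.identDistrib (hX : ∀ g, Measurable (X g)) (hstat : Stationary P X)
    (a b : G) : IdentDistrib (X a) (X b) P P where
  aemeasurable_fst := (hX a).aemeasurable
  aemeasurable_snd := (hX b).aemeasurable
  map_eq := by
    have hlaw := congrArg (Measure.map (Function.eval b)) (hstat (a * b⁻¹))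
    rwa [map_eval_procLaw (fun h => hX _), map_eval_procLaw hX, inv_mul_cancel_right] at hlaw

variable [TopologicalSpace G] [IsTopologicalGroup G] [IsFiniteMeasure P]

theorem StochasticallyContinuous.tendsto_procLaw_symmDiff (hX : ∀ g, Measurable (X g))
    (hstat : Stationary P X) (hsc : StochasticallyContinuous P X) {E : Set (G → ℝ)}
    (hE : MeasurableSet E) :
    Tendsto (fun g => procLaw P X ((shiftMap g ⁻¹' E) ∆ E)) (𝓝 1) (𝓝 0) := by
  refine tendsto_measure_preimage_symmDiff_of_generateFrom
    (hstat.measurePreserving_shiftMap hX) MeasurableSpace.pi_eq_generateFrom_projections ?_ hE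
  rintro _ ⟨h, B, hB, rfl⟩
  simp only [shiftMap_preimage_eval, procLaw_eval_preimage_symmDiff hX _ _ hB]
  have hto_h : Tendsto (fun g : G => g⁻¹ * h) (𝓝 1) (𝓝 h) :=
    (continuous_inv.mul continuous_const).tendsto' 1 h (by simp)
  exact tendsto_measure_preimage_symmDiff_of_tendstoInMeasure
    (fun δ hδ => (hsc h δ hδ).comp hto_h) (fun g => hstat.identDistrib hX _ _) hB

theorem continuous_procLaw_symmDiff (hX : ∀ g, Measurable (X g)) (hstat : Stationary P X)
    (hsc : StochasticallyContinuous P X) {E : Set (G → ℝ)} (hE : MeasurableSet E) :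
    Continuous fun g : G => procLaw P X ((shiftMap g ⁻¹' E) ∆ E) :=
  continuous_measure_preimage_symmDiff shiftMap_mul (hstat.measurePreserving_shiftMap hX) hE
    (hsc.tendsto_procLaw_symmDiff hX hstat hE)

theorem stochasticallyContinuous_of_continuous_procLaw_symmDiff (hX : ∀ g, Measurable (X g))
    (hcont : ∀ E : Set (G → ℝ), MeasurableSet E →
      Continuous fun g : G => procLaw P X ((shiftMap g ⁻¹' E) ∆ E)) :
    StochasticallyContinuous P X := by
  intro g₀
  refine tendstoInMeasure_of_tendsto_measure_symmDiff_setOf_lt (hX g₀).aemeasurable fun a => ?_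
  set E : Set (G → ℝ) := Function.eval g₀ ⁻¹' Set.Iio a
  have hE : MeasurableSet E := measurable_pi_apply g₀ measurableSet_Iio
  have hshift : ∀ g, P ({ω | X g ω < a} ∆ {ω | X g₀ ω < a}) =
      procLaw P X ((shiftMap (g₀ * g⁻¹) ⁻¹' E) ∆ E) := fun g => by
    rw [shiftMap_preimage_eval, procLaw_eval_preimage_symmDiff hX _ _ measurableSet_Iio,
      mul_inv_rev, inv_inv, inv_mul_cancel_right]
    rfl
  have hlim := ((hcont E hE).tendsto 1).comp
    ((continuous_const.mul continuous_inv).tendsto' g₀ 1 (mul_inv_cancel g₀))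
  rw [shiftMap_one, Set.preimage_id, symmDiff_self, Set.bot_eq_empty, measure_empty] at hlim
  simp only [hshift]
  exact hlim

end StationaryProcesses

theorem stochasticallyContinuous_iff_continuous_symmDiff_general
    {G : Type*} [Group G] [TopologicalSpace G] [IsTopologicalGroup G]
    {Ω : Type*} [MeasurableSpace Ω] (P : Measure Ω) [IsProbabilityMeasure P]
    (X : G → Ω → ℝ) (hmeas : ∀ g, Measurable (X g)) (hstat : Stationary P X) :
    StochasticallyContinuous P X ↔
      ∀ E : Set (G → ℝ), MeasurableSet E →
        Continuous fun g : G => procLaw P X ((shiftMap g ⁻¹' E) ∆ E) :=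
  ⟨fun hsc _ hE => continuous_procLaw_symmDiff hmeas hstat hsc hE,
    stochasticallyContinuous_of_continuous_procLaw_symmDiff hmeas⟩

/-- Hoffmann-Jørgensen/Pursley, group case: a stationary process over a
Polish group `G` is stochastically continuous iff for every `E ∈ ℬ^G` the map
`g ↦ ℙ_X(R_g⁻¹(E) ∆ E)` is continuous. -/
theorem stochasticallyContinuous_iff_continuous_symmDiff
    {G : Type*} [Group G] [TopologicalSpace G] [IsTopologicalGroup G] [PolishSpace G]
    {Ω : Type*} [MeasurableSpace Ω] (P : Measure Ω) [IsProbabilityMeasure P]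
    (X : G → Ω → ℝ) (hmeas : ∀ g, Measurable (X g)) (hstat : Stationary P X) :
    StochasticallyContinuous P X ↔
      ∀ E : Set (G → ℝ), MeasurableSet E →
        Continuous fun g : G => procLaw P X ((shiftMap g ⁻¹' E) ∆ E) :=
  stochasticallyContinuous_iff_continuous_symmDiff_general P X hmeas hstat

end Paper
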